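/- arXiv:2509.10404 — 2 statements merged into one kernel-verified Lean document; each statement's English description precedes it below -/
import Mathlib

section
/- For every nonzero real number λ and all integers m, n ≥ 0 such that binom(λ-1, m) ≠ 0, the degenerate hyperharmonic number H_{n,λ}^{(m+1)} satisfies H_{n,λ}^{(m+1)} = ((-1)^m / binom(λ-1, m)) · [ ∑_{l=0}^{n} H_{l,λ} · C(m+n-l-1, n-l) + binom(m+n-λ, n) · H_{m,λ} - C(n+m, n) · H_{m,λ} ], as an identity of real numbers. -/
/-!
Write `binom` for `Ring.choose`. Induction on `r`, driven by the alternating sum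
`∑_{k ≤ n} (-1)^k binom(x + 1, k) = (-1)^n binom(x, n)`, gives the closed form
`λ H^{(r)}_{n,λ} = (-1)^n (binom(-r, n) - binom(λ - r, n))`; for `r = 1` it reads
`λ H_{n,λ} = 1 - (-1)^n binom(λ - 1, n)`. Since `C(m+n-l-1, n-l) = (-1)^{n-l} binom(-m, n-l)`,
Chu–Vandermonde turns `∑_l H_{l,λ} C(m+n-l-1, n-l)` into `H^{(m+1)}_{n,λ}`, and upper negation
gives `binom(m+n-λ, n) - C(n+m, n) = -λ H^{(m+1)}_{n,λ}`. The bracket is therefore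
`H^{(m+1)}_{n,λ} (1 - λ H_{m,λ}) = (-1)^m binom(λ - 1, m) H^{(m+1)}_{n,λ}`.
-/

/-- The generalized binomial coefficient `binom(x, k) = x(x-1)⋯(x-k+1)/k!`
for a real number `x` and a natural number `k`. -/
noncomputable def genBinom (x : ℝ) (k : ℕ) : ℝ :=
  (∏ i ∈ Finset.range k, (x - i)) / (k.factorial : ℝ)

/-- The degenerate harmonic numbers: `H_{0,λ} = 0` and
`H_{n,λ} = ∑_{k=1}^{n} binom(λ-1, k-1) ⬝ (-1)^{k-1} / k` for `n ≥ 1`. -/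
noncomputable def degHarmonic (lam : ℝ) (n : ℕ) : ℝ :=
  ∑ k ∈ Finset.Icc 1 n, genBinom (lam - 1) (k - 1) * (-1 : ℝ) ^ (k - 1) / (k : ℝ)

/-- The degenerate hyperharmonic numbers `H_{n,λ}^{(r)}`:
`H_{0,λ}^{(r)} = 0` for all `r ≥ 0`, `H_{n,λ}^{(0)} = (1/λ) ⬝ binom(λ, n) ⬝ (-1)^{n-1}`
for `n ≥ 1`, and `H_{n,λ}^{(r)} = ∑_{k=1}^{n} H_{k,λ}^{(r-1)}` for `n, r ≥ 1`. -/
noncomputable def degHyperharmonic (lam : ℝ) : ℕ → ℕ → ℝ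
  | 0, n => if n = 0 then 0 else (1 / lam) * genBinom lam n * (-1 : ℝ) ^ (n - 1)
  | r + 1, n => ∑ k ∈ Finset.Icc 1 n, degHyperharmonic lam r k

open Finset

namespace Ring

variable {R : Type*} [CommRing R] [BinomialRing R]

theorem choose_neg_natCast (m j : ℕ) :
    choose (-(m : R)) j = (-1) ^ j * ((m + j - 1).choose j : R) := by
  have hmultichoose : multichoose (m : ℤ) j = (m + j - 1).choose j := rfl
  rw [choose_neg', ← Int.cast_natCast m, ← eq_intCast (Int.castRingHom R), ← map_multichoose,
    hmultichoose, eq_intCast, Int.cast_natCast, Units.smul_def, zsmul_eq_mul,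
    Int.cast_negOnePow_natCast]

theorem sum_range_neg_one_pow_mul_choose_add_one (r : R) (n : ℕ) :
    ∑ k ∈ range (n + 1), (-1) ^ k * choose (r + 1) k = (-1) ^ n * choose r n := by
  induction n with
  | zero => simp
  | succ n ih =>
    rw [sum_range_succ, ih, choose_succ_succ]
    ring

theorem sum_range_neg_one_pow_mul_choose_mul_choose (r : R) (m n : ℕ) :
    ∑ l ∈ range (n + 1), (-1) ^ l * choose r l * ((m + n - l - 1).choose (n - l) : R) =
      (-1) ^ n * choose (r - m) n := by
  rw [sub_eq_add_neg, add_choose_eq n (Commute.all _ _),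
    Nat.sum_antidiagonal_eq_sum_range_succ (fun i j => choose r i * choose (-(m : R)) j), mul_sum]
  refine sum_congr rfl fun l hl => ?_
  have hln : l ≤ n := Nat.lt_succ_iff.mp (mem_range.mp hl)
  have hsign : (-1 : R) ^ n = (-1) ^ l * (-1) ^ (n - l) := by
    rw [← pow_add, Nat.add_sub_of_le hln]
  rw [choose_neg_natCast, show m + (n - l) - 1 = m + n - l - 1 by omega, hsign]
  linear_combination -(-1) ^ l * choose r l * ((m + n - l - 1).choose (n - l) : R) *
    pow_mul_pow_eq_one (n - l) (by norm_num : (-1 : R) * -1 = 1)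

end Ring

theorem genBinom_eq_choose (x : ℝ) (k : ℕ) : genBinom x k = Ring.choose x k := by
  rw [Ring.choose_eq_smul, ← Polynomial.aeval_eq_smeval, Polynomial.aeval_def,
    ← Polynomial.eval_map, descPochhammer_map, descPochhammer_eval_eq_prod_range, genBinom,
    smul_eq_mul, div_eq_inv_mul]

theorem degHyperharmonic_eq_choose (lam : ℝ) (r n : ℕ) :
    degHyperharmonic lam r n =
      (-1) ^ n * (Ring.choose (-(r : ℝ)) n - Ring.choose (lam - r) n) / lam := by
  induction r generalizing n with
  | zero =>
    cases n with
    | zero => simp [degHyperharmonic]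
    | succ n =>
      simp only [degHyperharmonic, Nat.add_eq_zero_iff, one_ne_zero, and_false, reduceIte,
        genBinom_eq_choose, add_tsub_cancel_right, Nat.cast_zero, neg_zero, Ring.choose_zero_succ,
        sub_zero]
      ring
  | succ r ih =>
    have hsum : ∑ k ∈ Icc 1 n, degHyperharmonic lam r k =
        ∑ k ∈ range (n + 1), degHyperharmonic lam r k := by
      refine sum_subset (fun k hk => ?_) (fun k hk hk' => ?_)
      · simp only [mem_Icc, mem_range] at hk ⊢; omega
      · obtain rfl : k = 0 := by simp only [mem_Icc, mem_range] at hk hk'; omega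
        simp [ih]
    rw [degHyperharmonic, hsum]
    simp_rw [ih, mul_sub, sub_div, sum_sub_distrib, ← sum_div]
    rw [show -(r : ℝ) = -((r + 1 : ℕ) : ℝ) + 1 by push_cast; ring,
      show lam - r = lam - ((r + 1 : ℕ) : ℝ) + 1 by push_cast; ring,
      Ring.sum_range_neg_one_pow_mul_choose_add_one, Ring.sum_range_neg_one_pow_mul_choose_add_one]

theorem degHyperharmonic_succ_eq_choose_sub_choose (lam : ℝ) (r n : ℕ) :
    degHyperharmonic lam (r + 1) n =
      (((n + r).choose n : ℝ) - Ring.choose (r + n - lam) n) / lam := by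
  rw [degHyperharmonic_eq_choose, Ring.choose_neg_natCast,
    show lam - ((r + 1 : ℕ) : ℝ) = -(r + 1 - lam) by push_cast; ring, Ring.choose_neg,
    Units.smul_def, zsmul_eq_mul, Int.cast_negOnePow_natCast, show r + 1 + n - 1 = n + r by omega,
    show (r : ℝ) + 1 - lam + n - 1 = r + n - lam by ring]
  linear_combination (((n + r).choose n : ℝ) - Ring.choose (r + n - lam) n) / lam *
    pow_mul_pow_eq_one n (by norm_num : (-1 : ℝ) * -1 = 1)

theorem degHarmonic_eq_degHyperharmonic_one (lam : ℝ) (hlam : lam ≠ 0) (n : ℕ) :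
    degHarmonic lam n = degHyperharmonic lam 1 n := by
  refine sum_congr rfl fun k hk => ?_
  obtain ⟨j, rfl⟩ := Nat.exists_eq_add_of_le' (mem_Icc.mp hk).1
  have habsorb := Ring.choose_smul_choose lam (Nat.le_add_left 1 j)
  simp only [Nat.choose_one_right, nsmul_eq_mul, Nat.cast_add, Nat.cast_one,
    Ring.choose_one_right', pow_one, add_tsub_cancel_right, genBinom_eq_choose, degHyperharmonic,
    Nat.add_eq_zero_iff, one_ne_zero, and_false, reduceIte, one_div] at habsorb ⊢
  field_simp
  exact habsorb.symm

theorem sum_degHyperharmonic_mul_choose (lam : ℝ) (r m n : ℕ) :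
    ∑ l ∈ range (n + 1), degHyperharmonic lam r l * ((m + n - l - 1).choose (n - l) : ℝ) =
      degHyperharmonic lam (r + m) n := by
  simp only [degHyperharmonic_eq_choose]
  calc _ = (∑ l ∈ range (n + 1),
          (-1) ^ l * Ring.choose (-(r : ℝ)) l * ((m + n - l - 1).choose (n - l) : ℝ) -
        ∑ l ∈ range (n + 1),
          (-1) ^ l * Ring.choose (lam - r) l * ((m + n - l - 1).choose (n - l) : ℝ)) / lam := by
        rw [← sum_sub_distrib, sum_div]
        exact sum_congr rfl fun _ _ => by ring
    _ = _ := by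
        rw [Ring.sum_range_neg_one_pow_mul_choose_mul_choose,
          Ring.sum_range_neg_one_pow_mul_choose_mul_choose]
        push_cast
        ring_nf

/-- For every nonzero real `λ` and all integers `m, n ≥ 0` with `binom(λ-1, m) ≠ 0`,
`H_{n,λ}^{(m+1)} = ((-1)^m / binom(λ-1, m)) ⬝ [∑_{l=0}^{n} H_{l,λ} ⬝ C(m+n-l-1, n-l)
  + binom(m+n-λ, n) ⬝ H_{m,λ} - C(n+m, n) ⬝ H_{m,λ}]` as real numbers. -/
theorem degHyperharmonic_eq (lam : ℝ) (hlam : lam ≠ 0) (m n : ℕ)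
    (hbin : genBinom (lam - 1) m ≠ 0) :
    degHyperharmonic lam (m + 1) n =
      ((-1 : ℝ) ^ m / genBinom (lam - 1) m) *
        (∑ l ∈ Finset.range (n + 1), degHarmonic lam l * ((m + n - l - 1).choose (n - l) : ℝ) +
          genBinom ((m : ℝ) + (n : ℝ) - lam) n * degHarmonic lam m -
          ((n + m).choose n : ℝ) * degHarmonic lam m) := by
  have hsq : (-1 : ℝ) ^ m * (-1) ^ m = 1 := pow_mul_pow_eq_one m (by norm_num)
  have hconv : ∑ l ∈ range (n + 1), degHarmonic lam l * ((m + n - l - 1).choose (n - l) : ℝ) =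
      degHyperharmonic lam (m + 1) n := by
    simp_rw [degHarmonic_eq_degHyperharmonic_one lam hlam, sum_degHyperharmonic_mul_choose,
      add_comm 1 m]
  have hreflect : genBinom ((m : ℝ) + (n : ℝ) - lam) n - ((n + m).choose n : ℝ) =
      -(lam * degHyperharmonic lam (m + 1) n) := by
    rw [degHyperharmonic_succ_eq_choose_sub_choose, genBinom_eq_choose]
    field_simp
    ring
  have hharm : lam * degHarmonic lam m = 1 - (-1) ^ m * genBinom (lam - 1) m := by
    rw [degHarmonic_eq_degHyperharmonic_one lam hlam, degHyperharmonic_eq_choose,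
      genBinom_eq_choose, Ring.choose_neg_natCast, Nat.add_sub_cancel_left, Nat.choose_self,
      Nat.cast_one, mul_div_cancel₀ _ hlam]
    linear_combination hsq
  rw [hconv, div_mul_eq_mul_div, eq_div_iff hbin]
  linear_combination (-(-1) ^ m * degHarmonic lam m) * hreflect +
    (-1) ^ m * degHyperharmonic lam (m + 1) n * hharm -
    degHyperharmonic lam (m + 1) n * genBinom (lam - 1) m * hsq
end

section
/- For every nonzero real number λ and all integers m ≥ 0 and n ≥ 0, the degenerate hyperharmonic and degenerate harmonic numbers satisfy (-1)^m · binom(λ-1, m) · H_{n,λ}^{(m+1)} = C(n+m, m) · (H_{n+m,λ} - H_{m,λ}), as an identity of real numbers. -/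
lemma genBinom_zero (x : ℝ) : genBinom x 0 = 1 := by simp [genBinom]

lemma genBinom_succ (x : ℝ) (k : ℕ) :
    genBinom x (k+1) = genBinom x k * (x - k) / (k+1) := by
  have h : (k.factorial : ℝ) ≠ 0 := Nat.cast_ne_zero.mpr k.factorial_ne_zero
  simp only [genBinom, Finset.prod_range_succ, Nat.factorial_succ]
  push_cast
  rw [div_mul_eq_mul_div, div_div, div_eq_div_iff (by positivity) (by positivity)]
  ring

lemma genBinom_front (x : ℝ) (k : ℕ) :
    genBinom x (k+1) = x * genBinom (x - 1) k / (k+1) := by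
  have h : (k.factorial : ℝ) ≠ 0 := Nat.cast_ne_zero.mpr k.factorial_ne_zero
  simp only [genBinom, Finset.prod_range_succ', Nat.factorial_succ]
  have e : (∏ i ∈ Finset.range k, (x - ↑(i + 1))) = ∏ i ∈ Finset.range k, (x - 1 - i) := by
    apply Finset.prod_congr rfl
    intro i _
    push_cast; ring
  rw [e]
  push_cast
  rw [mul_div_assoc', div_div, div_eq_div_iff (by positivity) (by positivity)]
  ring

lemma degHarmonic_zero (lam : ℝ) : degHarmonic lam 0 = 0 := by simp [degHarmonic]

lemma degHarmonic_succ (lam : ℝ) (n : ℕ) :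
    degHarmonic lam (n+1) = degHarmonic lam n + genBinom (lam-1) n * (-1)^n / (n+1) := by
  unfold degHarmonic
  rw [Finset.sum_Icc_succ_top (by omega : 1 ≤ n + 1)]
  simp

lemma telescope (lam : ℝ) (m j : ℕ) :
    lam * (degHarmonic lam (m+j) - degHarmonic lam m) =
      (-1)^m * genBinom (lam-1) m - (-1)^(m+j) * genBinom (lam-1) (m+j) := by
  induction j with
  | zero => simp
  | succ j ih =>
    have hK : ((m : ℝ) + j + 1) ≠ 0 := by positivity
    have e1 : m + (j+1) = (m + j) + 1 := rfl
    rw [e1, degHarmonic_succ, genBinom_succ]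
    push_cast
    field_simp
    linear_combination ((m : ℝ) + j + 1) * ih

lemma degHyperharmonic_succ_zero (lam : ℝ) (r : ℕ) :
    degHyperharmonic lam (r+1) 0 = 0 := by simp [degHyperharmonic]

lemma degHyperharmonic_succ_succ (lam : ℝ) (r n : ℕ) :
    degHyperharmonic lam (r+1) (n+1) =
      degHyperharmonic lam (r+1) n + degHyperharmonic lam r (n+1) := by
  show (∑ k ∈ Finset.Icc 1 (n+1), degHyperharmonic lam r k) = _
  rw [Finset.sum_Icc_succ_top (by omega : 1 ≤ n + 1)]
  rfl

lemma degHyperharmonic_one (lam : ℝ) (hlam : lam ≠ 0) (n : ℕ) :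
    degHyperharmonic lam 1 n = degHarmonic lam n := by
  show (∑ k ∈ Finset.Icc 1 n, degHyperharmonic lam 0 k) = _
  unfold degHarmonic
  apply Finset.sum_congr rfl
  intro k hk
  have hk1 : 1 ≤ k := (Finset.mem_Icc.mp hk).1
  obtain ⟨j, rfl⟩ := Nat.exists_eq_add_of_le hk1
  show (if 1 + j = 0 then (0:ℝ) else (1 / lam) * genBinom lam (1+j) * (-1 : ℝ) ^ (1+j-1)) = _
  rw [if_neg (by omega)]
  have e : 1 + j = j + 1 := by omega
  rw [e, genBinom_front]
  have e2 : j + 1 - 1 = j := by omega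
  rw [e2]
  have hj : ((j : ℝ) + 1) ≠ 0 := by positivity
  push_cast
  field_simp

lemma key_step (lam x y P Q R S g g1 G c1 c2 c3 u v M NN : ℝ)
    (hM : M ≠ 0) (hNN : NN ≠ 0)
    (IHn : -u*g1*x = c1*(P - S))
    (hI : u*g*y = c2*(P - R))
    (hb : M*g1 = g*(lam - M))
    (h1 : NN*Q = NN*P + G*v)
    (h2 : M*S = M*R + g*u)
    (h3 : lam*(P - R) = u*g - v*G)
    (h4 : c3 = c1 + c2)
    (h5 : M*c3 = NN*c2)
    (h6 : M*c1 = (NN - M)*c2) :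
    -u*g1*(x + y) = c3*(Q - S) := by
  have hMN : M * NN ≠ 0 := mul_ne_zero hM hNN
  apply mul_left_cancel₀ hMN
  linear_combination (NN*M)*IHn + (-(lam-M)*NN)*hI + (-u*y*NN)*hb + (-NN*c2)*h1 +
    (NN*c3-NN*c1)*h2 + (-NN*c2)*h3 + (NN*g*u)*h4 + (NN*(R-Q))*h5 + (NN*(P-R))*h6

/-- For every nonzero real `λ` and all integers `m, n ≥ 0`,
`(-1)^m ⬝ binom(λ-1, m) ⬝ H_{n,λ}^{(m+1)} = C(n+m, m) ⬝ (H_{n+m,λ} - H_{m,λ})`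
as real numbers. -/
theorem degHyperharmonic_choose_mul (lam : ℝ) (hlam : lam ≠ 0) (m n : ℕ) :
    (-1 : ℝ) ^ m * genBinom (lam - 1) m * degHyperharmonic lam (m + 1) n =
      ((n + m).choose m : ℝ) * (degHarmonic lam (n + m) - degHarmonic lam m) := by
  induction m generalizing n with
  | zero =>
    simp [genBinom_zero, degHyperharmonic_one lam hlam, degHarmonic_zero]
  | succ m IH =>
    induction n with
    | zero =>
      simp [degHyperharmonic_succ_zero]
    | succ n IHn =>
      rw [degHyperharmonic_succ_succ]
      -- indices
      have e1 : n + 1 + (m + 1) = (n + m + 1) + 1 := by omega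
      rw [e1]
      have geq : genBinom (lam-1) (m+1) = genBinom (lam-1) m * ((lam-1) - m) / (m+1) :=
        genBinom_succ _ m
      have hM : ((m : ℝ) + 1) ≠ 0 := by positivity
      have hNN : ((n : ℝ) + m + 2) ≠ 0 := by positivity
      -- outer IH at n+1
      have hI0 := IH (n+1)
      have eI : n + 1 + m = n + m + 1 := by omega
      rw [eI] at hI0
      -- inner IH
      have hIn := IHn
      have eIn : n + (m + 1) = n + m + 1 := by omega
      rw [eIn] at hIn
      -- telescope: lam * (H_{n+m+1} - H_m) = ...
      have h3 := telescope lam m (n+1)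
      have e3 : m + (n + 1) = n + m + 1 := by omega
      rw [e3] at h3
      -- harmonic recurrences
      have h1 := degHarmonic_succ lam (n+m+1)
      have h2 := degHarmonic_succ lam m
      -- choose identities
      have h4 : (((n+m+1)+1).choose (m+1) : ℝ) =
          ((n+m+1).choose (m+1) : ℝ) + ((n+m+1).choose m : ℝ) := by
        rw [Nat.choose_succ_succ (n+m+1) m]
        push_cast; ring
      have h5 : ((m:ℝ)+1) * (((n+m+1)+1).choose (m+1) : ℝ) =
          ((n:ℝ)+m+2) * ((n+m+1).choose m : ℝ) := by
        have := Nat.add_one_mul_choose_eq (n+m+1) m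
        have : ((n+m+1)+1) * (n+m+1).choose m = ((n+m+1)+1).choose (m+1) * (m+1) := by
          rw [← Nat.add_one_mul_choose_eq]
        have h' : (((n+m+1)+1) * (n+m+1).choose m : ℝ) =
            ((((n+m+1)+1).choose (m+1) : ℕ) * (m+1) : ℝ) := by exact_mod_cast congrArg Nat.cast this
        push_cast at h' ⊢
        linarith [h']
      have h6 : ((m:ℝ)+1) * ((n+m+1).choose (m+1) : ℝ) =
          (((n:ℝ)+m+2) - ((m:ℝ)+1)) * ((n+m+1).choose m : ℝ) := by
        have := Nat.choose_succ_right_eq (n+m+1) m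
        have e : n + m + 1 - m = n + 1 := by omega
        rw [e] at this
        have h' : ((n+m+1).choose (m+1) * (m+1) : ℝ) = ((n+m+1).choose m * (n+1) : ℝ) := by
          exact_mod_cast congrArg Nat.cast this
        push_cast at h' ⊢
        linarith [h']
      -- now apply key_step
      rw [show ((-1:ℝ)^(m+1)) = -(-1:ℝ)^m from by ring]
      refine key_step lam (degHyperharmonic lam (m+1+1) n) (degHyperharmonic lam (m+1) (n+1))
        (degHarmonic lam (n+m+1)) (degHarmonic lam ((n+m+1)+1)) (degHarmonic lam m)
        (degHarmonic lam (m+1)) (genBinom (lam-1) m) (genBinom (lam-1) (m+1))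
        (genBinom (lam-1) (n+m+1)) ((n+m+1).choose (m+1) : ℝ) ((n+m+1).choose m : ℝ)
        ((((n+m+1)+1).choose (m+1)) : ℝ) ((-1:ℝ)^m) ((-1:ℝ)^(n+m+1)) ((m:ℝ)+1) ((n:ℝ)+m+2)
        hM hNN ?_ ?_ ?_ ?_ ?_ ?_ h4 h5 h6
      · -- IHn form: -u*g1*x = c1*(P - S)
        push_cast at hIn ⊢
        linear_combination hIn
      · push_cast at hI0 ⊢
        linear_combination hI0
      · -- hb : M*g1 = g*(lam - M)
        rw [geq, mul_comm ((m:ℝ)+1), div_mul_cancel₀ _ hM]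
        ring
      · -- h1 : NN*Q = NN*P + G*v
        rw [h1]
        push_cast
        rw [mul_add, show ((n:ℝ)+↑m+1+1) = (↑n+↑m+2) from by ring, mul_div_assoc',
          mul_div_cancel_left₀ _ hNN]
      · -- h2 : M*S = M*R + g*u
        rw [h2, mul_add, mul_div_assoc', mul_div_cancel_left₀ _ hM]
      · linear_combination h3
end
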